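/- Let μ > 0, let I ⊆ (0,∞) be an open interval, and let g : ℝ → ℝ be differentiable on I with g(h) > 0 for all h ∈ I. If g satisfies the differential equation (h + μ) · g'(h) = g(h) · (1 - g(h)) for all h ∈ I, then there exists a real number c such that g(h) · (h + μ - c) = h + μ for all h ∈ I. In particular, g(h) = (h+μ)/(h-μ) is a solution (with c = 2μ) that tends to 1 as h → ∞. -/

import Mathlib

/-- The positive solutions on an open interval `I ⊆ (0,∞)` of the ODE
`(h + μ) * g'(h) = g(h) * (1 - g(h))` satisfy `g(h) * (h + μ - c) = h + μ` for some
constant `c`. In particular `g(h) = (h+μ)/(h-μ)` is a solution (with `c = 2μ`)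
tending to `1` as `h → ∞`. -/
theorem alternative_coordinate_condition_ode_solution (μ : ℝ) (hμ : 0 < μ)
    (a b : ℝ) (hI : Set.Ioo a b ⊆ Set.Ioi (0 : ℝ))
    (g : ℝ → ℝ)
    (hdiff : ∀ h ∈ Set.Ioo a b, DifferentiableAt ℝ g h)
    (hpos : ∀ h ∈ Set.Ioo a b, 0 < g h)
    (hode : ∀ h ∈ Set.Ioo a b, (h + μ) * deriv g h = g h * (1 - g h)) :
    (∃ c : ℝ, ∀ h ∈ Set.Ioo a b, g h * (h + μ - c) = h + μ) ∧
    (∀ h : ℝ, h ≠ μ → (h + μ) / (h - μ) * (h + μ - 2 * μ) = h + μ) ∧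
    Filter.Tendsto (fun h : ℝ => (h + μ) / (h - μ)) Filter.atTop (nhds 1) := by
  refine ⟨?_, ?_, ?_⟩
  · -- main ODE part
    rcases Set.eq_empty_or_nonempty (Set.Ioo a b) with hemp | ⟨x₀, hx₀⟩
    · exact ⟨0, fun h hh => absurd hh (by simp [hemp])⟩
    · set φ : ℝ → ℝ := fun h => (h + μ) - (h + μ) / g h with hφ
      have hder : ∀ h ∈ Set.Ioo a b, HasDerivAt φ 0 h := by
        intro h hh
        have hg := hpos h hh
        have hgd := hdiff h hh
        have h1 : HasDerivAt (fun x : ℝ => x + μ) 1 h :=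
          (hasDerivAt_id h).add_const μ
        have h2 : HasDerivAt (fun x : ℝ => (x + μ) / g x)
            ((1 * g h - (h + μ) * deriv g h) / (g h) ^ 2) h :=
          h1.div hgd.hasDerivAt hg.ne'
        have := h1.sub h2
        refine this.congr_deriv ?_
        rw [hode h hh]
        field_simp
        ring
      have hx0pos : (0:ℝ) < x₀ := hI hx₀
      refine ⟨(x₀ + μ) - (x₀ + μ) / g x₀, fun h hh => ?_⟩
      have hconst : φ h = φ x₀ := by
        have hconv : Convex ℝ (Set.Ioo a b) := convex_Ioo a b
        have hdo : DifferentiableOn ℝ φ (Set.Ioo a b) := fun x hx =>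
          ((hder x hx).differentiableAt).differentiableWithinAt
        have hzero : ∀ x ∈ Set.Ioo a b, fderivWithin ℝ φ (Set.Ioo a b) x = 0 := by
          intro x hx
          rw [fderivWithin_of_isOpen isOpen_Ioo hx, (hder x hx).hasFDerivAt.fderiv]
          ext y
          simp
        exact hconv.is_const_of_fderivWithin_eq_zero hdo hzero hh hx₀
      have hg := hpos h hh
      have : (h + μ) - (h + μ) / g h = (x₀ + μ) - (x₀ + μ) / g x₀ := hconst
      have heq : (h + μ) / g h = (h + μ) - ((x₀ + μ) - (x₀ + μ) / g x₀) := by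
        linarith
      field_simp at heq
      rw [show (x₀ + μ) * (1 - 1 / g x₀) = x₀ + μ - (x₀ + μ) / g x₀ by ring] at heq
      linarith
  · intro h hh
    have : h - μ ≠ 0 := sub_ne_zero.mpr hh
    field_simp
    ring
  · have h1 : Filter.Tendsto (fun h : ℝ => h - μ) Filter.atTop Filter.atTop :=
      Filter.tendsto_atTop_add_const_right _ (-μ) Filter.tendsto_id |>.congr (by
        intro x; simp only [id]; ring)
    have h2 : Filter.Tendsto (fun h : ℝ => (2 * μ) / (h - μ)) Filter.atTop (nhds 0) := by
      simpa [div_eq_mul_inv] using Filter.Tendsto.const_mul (2 * μ) h1.inv_tendsto_atTop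
    have h3 : Filter.Tendsto (fun h : ℝ => 1 + (2 * μ) / (h - μ)) Filter.atTop (nhds 1) := by
      simpa using (tendsto_const_nhds.add h2)
    refine h3.congr' ?_
    filter_upwards [Filter.eventually_gt_atTop μ] with h hh
    have hne : h - μ ≠ 0 := ne_of_gt (by linarith)
    field_simp
    ring
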